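/- Let R be a commutative ℚ-algebra with elements η, l satisfying l³ = 0 and η⁷ − 6η⁶l + 24η⁵l² = 0, and let I : R → ℚ be a ℚ-linear map with I(η⁶l²) = 1. Then I(η⁷l) = 6 and I(η⁸) = 12. -/
import Mathlib

theorem stmt_17 (R : Type*) [CommRing R] [Algebra ℚ R]
    (η l : R) (hl : l ^ 3 = 0)
    (hrel : η ^ 7 - 6 * η ^ 6 * l + 24 * η ^ 5 * l ^ 2 = 0)
    (I : R →ₗ[ℚ] ℚ) (hI : I (η ^ 6 * l ^ 2) = 1) :
    I (η ^ 7 * l) = 6 ∧ I (η ^ 8) = 12 := by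
  have h1 : η ^ 7 * l = (6 : ℚ) • (η ^ 6 * l ^ 2) := by
    rw [Algebra.smul_def, map_ofNat]
    linear_combination l * hrel - 24 * η ^ 5 * hl
  have h2 : η ^ 8 = (12 : ℚ) • (η ^ 6 * l ^ 2) := by
    rw [Algebra.smul_def, map_ofNat]
    linear_combination (η + 6 * l) * hrel - 144 * η ^ 5 * hl
  constructor
  · rw [h1, map_smul, hI]; norm_num
  · rw [h2, map_smul, hI]; norm_num
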